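/- arXiv:1603.09518 — 3 statements merged into one kernel-verified Lean document; each statement's English description precedes it below -/
import Mathlib

section
/- Let Γ be a finite connected simple graph in which no vertex is a singleton twin. Then the resolving sets of Γ have the exchange property: for any two minimal resolving sets W₁ and W₂ and any u ∈ W₁, there exists v ∈ W₂ such that (W₁ \ {u}) ∪ {v} is again a minimal resolving set. -/
open SimpleGraph

/-- `W` is a resolving set for the graph `Γ`: any two distinct vertices are
distinguished by their distance to some element of `W`. -/
def IsResolvingSet {V : Type*} (Γ : SimpleGraph V) (W : Set V) : Prop :=
  ∀ u v : V, u ≠ v → ∃ w ∈ W, Γ.dist u w ≠ Γ.dist v w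

/-- The metric dimension of a graph: the least cardinality of a resolving set. -/
noncomputable def metricDim {V : Type*} (Γ : SimpleGraph V) : ℕ :=
  sInf {n | ∃ W : Set V, W.Finite ∧ W.ncard = n ∧ IsResolvingSet Γ W}

/-- A minimal resolving set: a resolving set no proper subset of which resolves. -/
def IsMinimalResolvingSet {V : Type*} (Γ : SimpleGraph V) (W : Set V) : Prop :=
  IsResolvingSet Γ W ∧ ∀ W' : Set V, W' ⊂ W → ¬ IsResolvingSet Γ W'

/-- Two vertices are twins if they have the same open neighborhood or the same
closed neighborhood. -/
def AreTwins {V : Type*} (Γ : SimpleGraph V) (u v : V) : Prop :=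
  Γ.neighborSet u = Γ.neighborSet v ∨
    insert u (Γ.neighborSet u) = insert v (Γ.neighborSet v)

/-- The twin class of a vertex. -/
def twinClass {V : Type*} (Γ : SimpleGraph V) (u : V) : Set V :=
  {v | AreTwins Γ u v}

/-- The number of twin classes of a graph. -/
noncomputable def twinClassCount {V : Type*} (Γ : SimpleGraph V) : ℕ :=
  {S : Set V | ∃ u : V, S = twinClass Γ u}.ncard

/-- Resolving sets of `Γ` have the exchange property. -/
def HasExchangeProperty {V : Type*} (Γ : SimpleGraph V) : Prop :=
  ∀ W₁ W₂ : Set V, IsMinimalResolvingSet Γ W₁ → IsMinimalResolvingSet Γ W₂ →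
    ∀ u ∈ W₁, ∃ v ∈ W₂, IsMinimalResolvingSet Γ ((W₁ \ {u}) ∪ {v})

/-- The (undirected) power graph of a group `G`: distinct `x`, `y` are adjacent
iff one is a positive power of the other. -/
def powerGraph (G : Type*) [Group G] : SimpleGraph G :=
  SimpleGraph.fromRel (fun x y => ∃ m : ℕ, 0 < m ∧ y = x ^ m)

/-- `R{x,y}`: the set of vertices having different distances to `x` and `y`. -/
def Rset {V : Type*} (Γ : SimpleGraph V) (x y : V) : Set V :=
  {z | Γ.dist x z ≠ Γ.dist y z}

section Helpers

variable {V : Type*} {Γ : SimpleGraph V}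

lemma twins_refl (u : V) : AreTwins Γ u u := Or.inl rfl

lemma twins_symm {u v : V} (h : AreTwins Γ u v) : AreTwins Γ v u := by
  cases h with
  | inl h => exact Or.inl h.symm
  | inr h => exact Or.inr h.symm

lemma twins_trans {a b c : V} (hab : AreTwins Γ a b) (hbc : AreTwins Γ b c) :
    AreTwins Γ a c := by
  rcases eq_or_ne a b with rfl | hab' ; · exact hbc
  rcases eq_or_ne b c with rfl | hbc' ; · exact hab
  cases hab with
  | inl h1 =>
    cases hbc with
    | inl h2 => exact Or.inl (h1.trans h2)
    | inr h2 =>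
      -- contradiction: a,b open twins (non-adjacent), b,c closed twins (adjacent)
      exfalso
      have hnadj : ¬ Γ.Adj a b := by
        intro hadj
        have : a ∈ Γ.neighborSet b := (Γ.mem_neighborSet b a).mpr hadj.symm
        rw [← h1, Γ.mem_neighborSet] at this
        exact Γ.irrefl this
      have hadjbc : Γ.Adj b c := by
        have : b ∈ insert c (Γ.neighborSet c) := h2 ▸ Set.mem_insert _ _
        rcases this with h | h
        · exact absurd h hbc'
        · exact ((Γ.mem_neighborSet c b).mp h).symm
      have hadjac : Γ.Adj a c := by
        have : c ∈ Γ.neighborSet a := by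
          rw [h1, Γ.mem_neighborSet]; exact hadjbc
        exact (Γ.mem_neighborSet a c).mp this
      have : a ∈ insert b (Γ.neighborSet b) := by
        rw [h2]
        exact Set.mem_insert_of_mem _ ((Γ.mem_neighborSet c a).mpr hadjac.symm)
      rcases this with h | h
      · exact hab' h
      · exact hnadj ((Γ.mem_neighborSet b a).mp h).symm
  | inr h1 =>
    cases hbc with
    | inl h2 =>
      exfalso
      have hadjab : Γ.Adj a b := by
        have : a ∈ insert b (Γ.neighborSet b) := h1 ▸ Set.mem_insert _ _
        rcases this with h | h
        · exact absurd h hab'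
        · exact ((Γ.mem_neighborSet b a).mp h).symm
      have hnadjbc : ¬ Γ.Adj b c := by
        intro hadj
        have : b ∈ Γ.neighborSet c := (Γ.mem_neighborSet c b).mpr hadj.symm
        rw [← h2, Γ.mem_neighborSet] at this
        exact Γ.irrefl this
      have hadjca : Γ.Adj c a := by
        have : a ∈ Γ.neighborSet c := by
          rw [← h2, Γ.mem_neighborSet]; exact hadjab.symm
        exact (Γ.mem_neighborSet c a).mp this
      have : c ∈ insert a (Γ.neighborSet a) :=
        Set.mem_insert_of_mem _ ((Γ.mem_neighborSet a c).mpr hadjca.symm)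
      rw [h1] at this
      rcases this with h | h
      · exact hbc' h.symm
      · exact hnadjbc ((Γ.mem_neighborSet b c).mp h)
    | inr h2 => exact Or.inr (h1.trans h2)

lemma twinClass_eq_of_twins {a b : V} (h : AreTwins Γ a b) :
    twinClass Γ a = twinClass Γ b := by
  ext x
  constructor
  · exact fun hx => twins_trans (twins_symm h) hx
  · exact fun hx => twins_trans h hx

lemma mem_twinClass_self (a : V) : a ∈ twinClass Γ a := twins_refl a

/-- Twins have equal distance to any third vertex. -/
lemma dist_eq_of_twins (hconn : Γ.Connected) {u v w : V} (h : AreTwins Γ u v)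
    (hwu : w ≠ u) (hwv : w ≠ v) : Γ.dist u w = Γ.dist v w := by
  rcases eq_or_ne u v with rfl | huv ; · rfl
  have key : ∀ a b : V, AreTwins Γ a b → w ≠ a → w ≠ b → Γ.dist b w ≤ Γ.dist a w := by
    intro a b hab hwa hwb
    obtain ⟨p, hp⟩ := (hconn a w).exists_walk_length_eq_dist
    cases p with
    | nil => exact absurd rfl hwa.symm
    | cons hadj q =>
      rename_i x
      have hq : q.length + 1 = Γ.dist a w := by simpa using hp
      rcases eq_or_ne x b with h | hxb
      · rw [← h]
        calc Γ.dist x w ≤ q.length := SimpleGraph.dist_le q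
          _ ≤ Γ.dist a w := by omega
      · have hbx : Γ.Adj b x := by
          have hx : x ∈ Γ.neighborSet a := (Γ.mem_neighborSet a x).mpr hadj
          cases hab with
          | inl h' => rw [h'] at hx; exact (Γ.mem_neighborSet b x).mp hx
          | inr h' =>
            have : x ∈ insert b (Γ.neighborSet b) := by
              rw [← h']; exact Set.mem_insert_of_mem _ hx
            rcases this with h'' | h''
            · exact absurd h'' hxb
            · exact (Γ.mem_neighborSet b x).mp h''
        calc Γ.dist b w ≤ (SimpleGraph.Walk.cons hbx q).length := SimpleGraph.dist_le _
          _ = q.length + 1 := by simp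
          _ = Γ.dist a w := hq
  exact le_antisymm (key v u (twins_symm h) hwv hwu) (key u v h hwu hwv)

lemma subsing_of_resolving (hconn : Γ.Connected) {W : Set V}
    (hW : IsResolvingSet Γ W) (x : V) : (twinClass Γ x \ W).Subsingleton := by
  intro a ha b hb
  by_contra hab
  obtain ⟨w, hwW, hdist⟩ := hW a b hab
  have htw : AreTwins Γ a b := twins_trans (twins_symm ha.1) hb.1
  have hwa : w ≠ a := fun h => ha.2 (h ▸ hwW)
  have hwb : w ≠ b := fun h => hb.2 (h ▸ hwW)
  exact hdist (dist_eq_of_twins hconn htw hwa hwb)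

lemma resolving_of_subsing (hconn : Γ.Connected) (hns : ∀ u : V, twinClass Γ u ≠ {u})
    {W : Set V} (hW : ∀ x, (twinClass Γ x \ W).Subsingleton) : IsResolvingSet Γ W := by
  intro u v huv
  have hd0 : ∀ a b : V, a ≠ b → Γ.dist a b ≠ 0 := fun a b hab =>
    (hconn.pos_dist_of_ne hab).ne'
  have push : ∀ w : V, w ≠ u → w ≠ v → Γ.dist u w ≠ Γ.dist v w →
      ∃ w' ∈ W, Γ.dist u w' ≠ Γ.dist v w' := by
    intro w hwu hwv hd
    by_cases hwW : w ∈ W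
    · exact ⟨w, hwW, hd⟩
    have hex : ∃ w' ∈ twinClass Γ w, w' ≠ w := by
      by_contra h
      push_neg at h
      exact hns w (Set.eq_singleton_iff_unique_mem.mpr ⟨mem_twinClass_self w, h⟩)
    obtain ⟨w', hw'cls, hw'w⟩ := hex
    have hw'W : w' ∈ W := by
      by_contra hw'W
      exact hw'w (hW w ⟨hw'cls, hw'W⟩ ⟨mem_twinClass_self w, hwW⟩)
    rcases eq_or_ne w' u with rfl | h1
    · refine ⟨w', hw'W, ?_⟩
      rw [SimpleGraph.dist_self]
      exact (hd0 v w' (Ne.symm huv)).symm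
    rcases eq_or_ne w' v with rfl | h2
    · refine ⟨w', hw'W, ?_⟩
      rw [SimpleGraph.dist_self]
      exact hd0 u w' huv
    · have htw : AreTwins Γ w w' := hw'cls
      have e1 : Γ.dist w u = Γ.dist w' u :=
        dist_eq_of_twins hconn htw hwu.symm h1.symm
      have e2 : Γ.dist w v = Γ.dist w' v :=
        dist_eq_of_twins hconn htw hwv.symm h2.symm
      refine ⟨w', hw'W, ?_⟩
      rw [SimpleGraph.dist_comm, SimpleGraph.dist_comm (u := v), ← e1, ← e2,
        SimpleGraph.dist_comm, SimpleGraph.dist_comm (u := w)]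
      exact hd
  by_cases htuv : AreTwins Γ u v
  · have huv' : u ∈ W ∨ v ∈ W := by
      by_contra h
      push_neg at h
      exact huv (hW u ⟨mem_twinClass_self u, h.1⟩ ⟨htuv, h.2⟩)
    rcases huv' with h | h
    · refine ⟨u, h, ?_⟩
      rw [SimpleGraph.dist_self]
      exact (hd0 v u (Ne.symm huv)).symm
    · refine ⟨v, h, ?_⟩
      rw [SimpleGraph.dist_self (v := v)]
      exact hd0 u v huv
  · rw [AreTwins, not_or] at htuv
    obtain ⟨hopen, hclosed⟩ := htuv
    have hx : ∃ x, x ≠ u ∧ x ≠ v ∧ ¬ (Γ.Adj u x ↔ Γ.Adj v x) := by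
      by_cases hadj : Γ.Adj u v
      · have : ∃ x, ¬ (x ∈ insert u (Γ.neighborSet u) ↔ x ∈ insert v (Γ.neighborSet v)) := by
          by_contra h
          push_neg at h
          exact hclosed (Set.ext fun x => h x)
        obtain ⟨x, hx⟩ := this
        have hxu : x ≠ u := by
          rintro rfl
          exact hx (by simp [hadj.symm])
        have hxv : x ≠ v := by
          rintro rfl
          exact hx (by simp [hadj])
        refine ⟨x, hxu, hxv, fun h => hx ?_⟩
        simp only [Set.mem_insert_iff, SimpleGraph.mem_neighborSet]
        constructor
        · rintro (h' | h')
          · exact absurd h' hxu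
          · exact Or.inr (h.mp h')
        · rintro (h' | h')
          · exact absurd h' hxv
          · exact Or.inr (h.mpr h')
      · have : ∃ x, ¬ (x ∈ Γ.neighborSet u ↔ x ∈ Γ.neighborSet v) := by
          by_contra h
          push_neg at h
          exact hopen (Set.ext fun x => h x)
        obtain ⟨x, hx⟩ := this
        simp only [SimpleGraph.mem_neighborSet] at hx
        have hxu : x ≠ u := by
          rintro rfl
          exact hx (iff_of_false (Γ.irrefl) (fun h => hadj h.symm))
        have hxv : x ≠ v := by
          rintro rfl
          exact hx (iff_of_false hadj (Γ.irrefl))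
        exact ⟨x, hxu, hxv, hx⟩
    obtain ⟨x, hxu, hxv, hx⟩ := hx
    apply push x hxu hxv
    rw [iff_iff_implies_and_implies, not_and_or] at hx
    rcases hx with hx | hx
    · push_neg at hx
      obtain ⟨h1, h2⟩ := hx
      rw [SimpleGraph.dist_eq_one_iff_adj.mpr h1]
      exact fun h => h2 (SimpleGraph.dist_eq_one_iff_adj.mp h.symm)
    · push_neg at hx
      obtain ⟨h1, h2⟩ := hx
      rw [SimpleGraph.dist_eq_one_iff_adj.mpr h1]
      exact fun h => h2 (SimpleGraph.dist_eq_one_iff_adj.mp h)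

lemma resolving_minimal_iff (hconn : Γ.Connected) (hns : ∀ u : V, twinClass Γ u ≠ {u}) {W : Set V} :
    IsMinimalResolvingSet Γ W ↔ ∀ x : V, ∃ m, twinClass Γ x \ W = {m} := by
  constructor
  · rintro ⟨hres, hmin⟩ x
    have hsub := subsing_of_resolving hconn hres x
    rcases hsub.eq_empty_or_singleton with he | hs
    · exfalso
      have hxW : x ∈ W := by
        by_contra h
        have : x ∈ twinClass Γ x \ W := ⟨mem_twinClass_self x, h⟩
        rw [he] at this
        exact this
      refine hmin (W \ {x}) (Set.sdiff_singleton_ssubset.mpr hxW) ?_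
      apply resolving_of_subsing hconn hns
      intro z
      by_cases hxz : x ∈ twinClass Γ z
      · have hcz : twinClass Γ z = twinClass Γ x := twinClass_eq_of_twins hxz
        have : twinClass Γ z \ (W \ {x}) = {x} := by
          ext y
          simp only [Set.mem_diff, Set.mem_singleton_iff, not_and, not_not]
          constructor
          · rintro ⟨hy1, hy2⟩
            by_contra hyx
            have hyW : y ∈ W := by
              by_contra hyW
              have : y ∈ twinClass Γ x \ W := ⟨hcz ▸ hy1, hyW⟩
              rw [he] at this
              exact this
            exact hyx (hy2 hyW)
          · rintro rfl
            exact ⟨hxz, fun _ => rfl⟩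
        rw [this]
        exact Set.subsingleton_singleton
      · have : twinClass Γ z \ (W \ {x}) = twinClass Γ z \ W := by
          ext y
          simp only [Set.mem_diff, Set.mem_singleton_iff, not_and, not_not]
          constructor
          · rintro ⟨hy1, hy2⟩
            refine ⟨hy1, fun hyW => ?_⟩
            have := hy2 hyW
            subst this
            exact hxz hy1
          · rintro ⟨hy1, hy2⟩
            exact ⟨hy1, fun hyW => absurd hyW hy2⟩
        rw [this]
        exact subsing_of_resolving hconn hres z
    · exact hs
  · intro h
    have hres : IsResolvingSet Γ W := by
      apply resolving_of_subsing hconn hns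
      intro x
      obtain ⟨m, hm⟩ := h x
      rw [hm]
      exact Set.subsingleton_singleton
    refine ⟨hres, ?_⟩
    intro W' hss hres'
    obtain ⟨y, hyW, hyW'⟩ := Set.exists_of_ssubset hss
    obtain ⟨m, hm⟩ := h y
    have hmmem : m ∈ twinClass Γ y \ W := hm ▸ rfl
    have hmy : m ≠ y := fun h' => hmmem.2 (h' ▸ hyW)
    have hmW' : m ∉ W' := fun h' => hmmem.2 (hss.1 h')
    obtain ⟨w, hwW', hd⟩ := hres' y m hmy.symm
    have hwy : w ≠ y := fun h' => hyW' (h' ▸ hwW')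
    have hwm : w ≠ m := fun h' => hmW' (h' ▸ hwW')
    exact hd (dist_eq_of_twins hconn hmmem.1 hwy hwm)

theorem exchange_main (hconn : Γ.Connected) (hns : ∀ u : V, twinClass Γ u ≠ {u}) :
    ∀ W₁ W₂ : Set V, IsMinimalResolvingSet Γ W₁ → IsMinimalResolvingSet Γ W₂ →
    ∀ u ∈ W₁, ∃ v ∈ W₂, IsMinimalResolvingSet Γ ((W₁ \ {u}) ∪ {v}) := by
  intro W₁ W₂ h1 h2 u hu
  rw [resolving_minimal_iff hconn hns] at h1 h2
  obtain ⟨m, hm⟩ := h1 u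
  have hmmem : m ∈ twinClass Γ u \ W₁ := hm ▸ rfl
  have hmu : m ≠ u := fun h => hmmem.2 (h ▸ hu)
  have hchoice : u ∈ W₂ ∨ m ∈ W₂ := by
    by_contra h
    push_neg at h
    obtain ⟨m₂, hm₂⟩ := h2 u
    have h1' : u ∈ twinClass Γ u \ W₂ := ⟨mem_twinClass_self u, h.1⟩
    have h2' : m ∈ twinClass Γ u \ W₂ := ⟨hmmem.1, h.2⟩
    rw [hm₂, Set.mem_singleton_iff] at h1' h2'
    exact hmu (h2'.trans h1'.symm)
  rcases hchoice with hv | hv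
  · refine ⟨u, hv, ?_⟩
    have heq : (W₁ \ {u}) ∪ {u} = W₁ :=
      Set.diff_union_of_subset (Set.singleton_subset_iff.mpr hu)
    rw [heq, resolving_minimal_iff hconn hns]
    exact h1
  · refine ⟨m, hv, ?_⟩
    rw [resolving_minimal_iff hconn hns]
    intro x
    by_cases hxC : u ∈ twinClass Γ x
    · refine ⟨u, ?_⟩
      rw [twinClass_eq_of_twins (hxC : AreTwins Γ x u)]
      ext y
      simp only [Set.mem_diff, Set.mem_union, Set.mem_singleton_iff]
      constructor
      · rintro ⟨hy1, hy2⟩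
        by_contra hyu
        have hym : y ≠ m := fun h => hy2 (Or.inr h)
        have hyW₁ : y ∉ W₁ := fun h => hy2 (Or.inl ⟨h, hyu⟩)
        have : y ∈ twinClass Γ u \ W₁ := ⟨hy1, hyW₁⟩
        rw [hm, Set.mem_singleton_iff] at this
        exact hym this
      · rintro rfl
        refine ⟨mem_twinClass_self _, ?_⟩
        rintro (h | h)
        · exact h.2 rfl
        · exact hmu h.symm
    · have hmx : m ∉ twinClass Γ x := by
        intro hmem
        apply hxC
        have e1 : twinClass Γ x = twinClass Γ m := twinClass_eq_of_twins hmem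
        have e2 : twinClass Γ u = twinClass Γ m := twinClass_eq_of_twins hmmem.1
        rw [e1, ← e2]
        exact mem_twinClass_self u
      obtain ⟨m₁, hm₁⟩ := h1 x
      refine ⟨m₁, ?_⟩
      rw [← hm₁]
      ext y
      simp only [Set.mem_diff, Set.mem_union, Set.mem_singleton_iff]
      constructor
      · rintro ⟨hy1, hy2⟩
        refine ⟨hy1, fun hyW₁ => ?_⟩
        have hyu : y ≠ u := fun h => hxC (h ▸ hy1)
        exact hy2 (Or.inl ⟨hyW₁, hyu⟩)
      · rintro ⟨hy1, hy2⟩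
        refine ⟨hy1, ?_⟩
        rintro (h | h)
        · exact hy2 h.1
        · exact hmx (h ▸ hy1)

end Helpers

/-- A finite connected graph with no singleton twin has the
exchange property for resolving sets. -/
theorem exchange_of_no_singleton_twin
    {V : Type*} [Fintype V] (Γ : SimpleGraph V) (hconn : Γ.Connected)
    (hns : ∀ u : V, twinClass Γ u ≠ {u}) :
    HasExchangeProperty Γ := by
  exact exchange_main hconn hns
end

section
/- Let n ≥ 3 and let D_{2n} = ⟨a, b | aⁿ = b² = e, (ab)² = e⟩ be the dihedral group of order 2n with set of reflections B = {b, ab, a²b, …, a^{n−1}b}. Then no element w ∈ B is a resolving involution of the power graph P_{D_{2n}}: there do not exist vertices x, y outside the twin class of w with R{x,y} = {x, y, w}. -/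
open SimpleGraph

/-!
The reflections of `D_{2n}` form a single class of open twins in the power graph: each of them
is adjacent to the identity only. Vertices with the same open neighbourhood are at the same
distance from every other vertex, so for `x`, `y` outside this class the set `R{x,y}` contains
either all `n ≥ 2` reflections or none of them; it can never contain exactly one.
-/

open SimpleGraph DihedralGroup

namespace SimpleGraph

variable {V : Type*} {G : SimpleGraph V}

lemma dist_eq_of_neighborSet_eq {u v x : V} (h : G.neighborSet u = G.neighborSet v)
    (hu : x ≠ u) (hv : x ≠ v) : G.dist u x = G.dist v x := by
  have lengths_subset : ∀ {u v : V}, G.neighborSet u = G.neighborSet v → x ≠ u →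
      Set.range (Walk.length : G.Walk u x → ℕ) ⊆ Set.range (Walk.length : G.Walk v x → ℕ) := by
    rintro u v h hu _ ⟨p, rfl⟩
    cases p with
    | nil => exact absurd rfl hu
    | cons hadj p =>
      rw [← mem_neighborSet, h] at hadj
      exact ⟨.cons hadj p, rfl⟩
  rw [dist_eq_sInf, dist_eq_sInf, (lengths_subset h hu).antisymm (lengths_subset h.symm hv)]

lemma mem_Rset_iff_of_neighborSet_eq {x y u v : V} (h : G.neighborSet u = G.neighborSet v)
    (hxu : x ≠ u) (hxv : x ≠ v) (hyu : y ≠ u) (hyv : y ≠ v) :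
    u ∈ Rset G x y ↔ v ∈ Rset G x y := by
  simp only [Rset, Set.mem_ofPred_eq, dist_comm (u := x), dist_comm (u := y),
    dist_eq_of_neighborSet_eq h hxu hxv, dist_eq_of_neighborSet_eq h hyu hyv]

end SimpleGraph

namespace DihedralGroup

variable {n : ℕ}

lemma sr_pow_eq_one_or_eq (i : ZMod n) (m : ℕ) : sr i ^ m = 1 ∨ sr i ^ m = sr i := by
  rw [← pow_mod_orderOf, orderOf_sr]
  rcases Nat.mod_two_eq_zero_or_one m with h | h <;> simp [h]

lemma powerGraph_adj_sr_iff (i : ZMod n) (z : DihedralGroup n) :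
    (powerGraph (DihedralGroup n)).Adj (sr i) z ↔ z = 1 := by
  constructor
  · rintro ⟨hne, ⟨m, -, rfl⟩ | ⟨m, -, hpow⟩⟩
    · exact (sr_pow_eq_one_or_eq i m).resolve_right (Ne.symm hne)
    · cases z with
      | r j => simp [r_pow] at hpow
      | sr j =>
        rcases sr_pow_eq_one_or_eq j m with h | h <;> rw [h] at hpow
        · cases hpow
        · exact absurd hpow hne
  · rintro rfl
    exact ⟨by rw [one_def]; rintro ⟨⟩, Or.inl ⟨2, two_pos, by rw [pow_two, sr_mul_self]⟩⟩

lemma powerGraph_neighborSet_sr (i : ZMod n) :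
    (powerGraph (DihedralGroup n)).neighborSet (sr i) = {1} := by
  ext z
  exact powerGraph_adj_sr_iff i z

lemma powerGraph_neighborSet_sr_eq (i j : ZMod n) :
    (powerGraph (DihedralGroup n)).neighborSet (sr i) =
      (powerGraph (DihedralGroup n)).neighborSet (sr j) := by
  rw [powerGraph_neighborSet_sr, powerGraph_neighborSet_sr]

lemma sr_mem_twinClass_sr (i j : ZMod n) :
    sr j ∈ twinClass (powerGraph (DihedralGroup n)) (sr i) :=
  Or.inl (powerGraph_neighborSet_sr_eq i j)

end DihedralGroup

/-- No reflection of the dihedral group `D_{2n}` (`n ≥ 3`) is a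
resolving involution of the power graph `P_{D_{2n}}`. -/
theorem reflection_not_resolving_involution (n : ℕ) (hn : 3 ≤ n)
    (w : DihedralGroup n) (hw : ∃ i : ZMod n, w = DihedralGroup.sr i) :
    ¬ ∃ x y : DihedralGroup n,
        x ∉ twinClass (powerGraph (DihedralGroup n)) w ∧
        y ∉ twinClass (powerGraph (DihedralGroup n)) w ∧
        Rset (powerGraph (DihedralGroup n)) x y = {x, y, w} := by
  obtain ⟨i, rfl⟩ := hw
  rintro ⟨x, y, hx, hy, hR⟩
  have ne_sr : ∀ {z : DihedralGroup n}, z ∉ twinClass _ (sr i) → ∀ j, z ≠ sr j :=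
    fun hz j hzj => hz (hzj ▸ sr_mem_twinClass_sr i j)
  have : Fact (1 < n) := ⟨by omega⟩
  have hmem : sr (i + 1) ∈ Rset (powerGraph (DihedralGroup n)) x y := by
    rw [← mem_Rset_iff_of_neighborSet_eq (powerGraph_neighborSet_sr_eq i (i + 1))
      (ne_sr hx i) (ne_sr hx _) (ne_sr hy i) (ne_sr hy _), hR]
    simp
  rw [hR] at hmem
  rcases hmem with h | h | h
  · exact ne_sr hx _ h.symm
  · exact ne_sr hy _ h.symm
  · simp at h
end

section
/- Let G be a cyclic group of odd order at least 3. Then the power graph P_G has no singleton twin: every twin class contains at least two elements. -/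
open SimpleGraph

lemma mem_zpowers_iff_pos_pow {G : Type*} [Group G] [Fintype G] (x z : G) :
    (∃ m : ℕ, 0 < m ∧ z = x ^ m) ↔ z ∈ Subgroup.zpowers x := by
  constructor
  · rintro ⟨m, hm, rfl⟩
    exact ⟨(m : ℤ), by simp⟩
  · intro h
    obtain ⟨n, hn⟩ := (Submonoid.mem_powers_iff z x).mp
      (mem_powers_iff_mem_zpowers.mpr h)
    rcases Nat.eq_zero_or_pos n with rfl | hpos
    · exact ⟨orderOf x, orderOf_pos x, by simpa [pow_orderOf_eq_one] using hn.symm⟩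
    · exact ⟨n, hpos, hn.symm⟩

lemma closed_nbhd_powerGraph {G : Type*} [Group G] [Fintype G] (x : G) :
    insert x ((powerGraph G).neighborSet x) =
      {z | z ∈ Subgroup.zpowers x ∨ x ∈ Subgroup.zpowers z} := by
  ext z
  simp only [Set.mem_insert_iff, SimpleGraph.mem_neighborSet, powerGraph,
    SimpleGraph.fromRel_adj, Set.mem_setOf_eq, ← mem_zpowers_iff_pos_pow]
  constructor
  · rintro (rfl | ⟨_, h | h⟩)
    · exact Or.inl ⟨1, one_pos, (pow_one _).symm⟩
    · exact Or.inl h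
    · exact Or.inr h
  · intro h
    by_cases hz : z = x
    · exact Or.inl hz
    · exact Or.inr ⟨fun he => hz he.symm, h⟩

/-- The power graph of a cyclic group of odd order at least 3 has
no singleton twin: every vertex has another twin. -/
theorem no_singleton_twin_powerGraph_cyclic_odd
    (G : Type*) [Group G] [Fintype G] (hG : IsCyclic G)
    (hodd : Odd (Fintype.card G)) (h3 : 3 ≤ Fintype.card G) :
    ∀ x : G, ∃ y : G, y ≠ x ∧ AreTwins (powerGraph G) x y := by
  intro x
  by_cases hx : x = 1
  · subst hx
    obtain ⟨g, hg⟩ := hG.exists_generator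
    refine ⟨g, ?_, ?_⟩
    · intro hg1
      have : Fintype.card G = 1 := by
        rw [Fintype.card_eq_one_iff]
        refine ⟨1, fun y => ?_⟩
        obtain ⟨k, hk⟩ := Subgroup.mem_zpowers_iff.mp (hg y)
        rw [← hk, hg1, one_zpow]
      omega
    · right
      rw [closed_nbhd_powerGraph, closed_nbhd_powerGraph]
      ext z
      simp only [Set.mem_setOf_eq]
      exact ⟨fun _ => Or.inl (hg z), fun _ => Or.inr (Subgroup.one_mem _)⟩
  · refine ⟨x⁻¹, ?_, ?_⟩
    · intro he
      have h2 : x ^ 2 = 1 := by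
        rw [pow_two]; nth_rewrite 1 [← he]; exact inv_mul_cancel x
      have hd : orderOf x ∣ 2 := orderOf_dvd_of_pow_eq_one h2
      have hne : ¬ (2 ∣ orderOf x) := by
        intro h2d
        exact (Nat.not_even_iff_odd.mpr hodd)
          ((even_iff_two_dvd).mpr (h2d.trans (orderOf_dvd_card)))
      rcases (Nat.dvd_prime Nat.prime_two).mp hd with h1 | h1
      · exact hx (orderOf_eq_one_iff.mp h1)
      · exact hne (h1 ▸ dvd_refl _)
    · right
      rw [closed_nbhd_powerGraph, closed_nbhd_powerGraph]
      ext z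
      simp only [Set.mem_setOf_eq, Subgroup.zpowers_inv, Subgroup.inv_mem_iff]
end
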